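/- Necessity of the sufficient condition: Let F₀ be a finite subset of the set 𝔽 of function symbols of the language, and let Q be a query whose atoms have pairwise distinct predicate symbols. If for every finite definite program P whose set of occurring function symbols is exactly F₀ the equivalence (M_P ⊨ Q iff P ⊨ Q) holds, then either 𝔽 contains a non-constant function symbol not in F₀, or for each atom A of Q with k distinct variables there are at least k constants in 𝔽 not occurring in P's symbols F₀ and not occurring in A. -/

import Mathlib

/-- First-order terms over function symbols `F` (each use records the number of
arguments), with variables indexed by `ℕ`. -/
inductive Tm (F : Type) : Type
  | var : ℕ → Tm F
  | app : F → (k : ℕ) → (Fin k → Tm F) → Tm F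

namespace Tm

/-- Apply a substitution to a term. -/
def subst (σ : ℕ → Tm F) : Tm F → Tm F
  | var n => σ n
  | app f k ts => app f k (fun i => (ts i).subst σ)

/-- Variables occurring in a term. -/
def vars : Tm F → Set ℕ
  | var n => {n}
  | app _ _ ts => ⋃ i, (ts i).vars

/-- Function symbols occurring in a term. -/
def symbols : Tm F → Set F
  | var _ => ∅
  | app f _ ts => {f} ∪ ⋃ i, (ts i).symbols

/-- Subterms of a term (including the term itself). -/
def subterms : Tm F → Set (Tm F)
  | var n => {var n}
  | app f k ts => {app f k ts} ∪ ⋃ i, (ts i).subterms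

/-- The head (outermost) function symbol, if any. -/
def head? : Tm F → Option F
  | var _ => none
  | app f _ _ => some f

def IsVar : Tm F → Prop
  | var _ => True
  | app _ _ _ => False

def isGround (t : Tm F) : Prop := t.vars = ∅

/-- Well-formedness w.r.t. an arity assignment: every function symbol is used
with exactly its arity. -/
def WF (ar : F → ℕ) : Tm F → Prop
  | var _ => True
  | app f k ts => k = ar f ∧ ∀ i, (ts i).WF ar

end Tm

/-- A term is an alien w.r.t. a set `S` of function symbols if it is a
non-variable term whose head symbol is not in `S`. -/
def IsAlien (S : Set F) (t : Tm F) : Prop :=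
  ∃ f, t.head? = some f ∧ f ∉ S

/-- The substitution `{X/u}`. -/
def sub1 (X : ℕ) (u : Tm F) : ℕ → Tm F := fun n => if n = X then u else .var n

/-- `σ` is the substitution `{V 0/t 0, …, V (k-1)/t (k-1)}`. -/
def FiniteSub (σ : ℕ → Tm F) (V : Fin k → ℕ) (t : Fin k → Tm F) : Prop :=
  (∀ i, σ (V i) = t i) ∧ ∀ n, (∀ i, V i ≠ n) → σ n = Tm.var n

/-- An atom: a predicate symbol applied to a list of terms. -/
structure Atom (F Pr : Type) where
  pred : Pr
  args : List (Tm F)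

namespace Atom
def subst (σ : ℕ → Tm F) (A : Atom F Pr) : Atom F Pr := ⟨A.pred, A.args.map (Tm.subst σ)⟩
def vars (A : Atom F Pr) : Set ℕ := { n | ∃ t ∈ A.args, n ∈ t.vars }
def symbols (A : Atom F Pr) : Set F := { f | ∃ t ∈ A.args, f ∈ t.symbols }
def isGround (A : Atom F Pr) : Prop := A.vars = ∅
def WFA (ar : F → ℕ) (A : Atom F Pr) : Prop := ∀ t ∈ A.args, t.WF ar
end Atom

/-- A definite clause `head ← body`. -/
structure Clause (F Pr : Type) where
  head : Atom F Pr
  body : List (Atom F Pr)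

/-- A definite program: a set of definite clauses. -/
abbrev Program (F Pr : Type) := Set (Clause F Pr)

/-- A query: a conjunction (list) of atoms. -/
abbrev Query (F Pr : Type) := List (Atom F Pr)

def Clause.subst (σ : ℕ → Tm F) (C : Clause F Pr) : Clause F Pr :=
  ⟨C.head.subst σ, C.body.map (Atom.subst σ)⟩

def Clause.symbols (C : Clause F Pr) : Set F :=
  C.head.symbols ∪ { f | ∃ A ∈ C.body, f ∈ A.symbols }

def Clause.vars (C : Clause F Pr) : Set ℕ :=
  C.head.vars ∪ { n | ∃ A ∈ C.body, n ∈ A.vars }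

def Clause.WFC (ar : F → ℕ) (C : Clause F Pr) : Prop :=
  C.head.WFA ar ∧ ∀ A ∈ C.body, A.WFA ar

def progSymbols (Pg : Program F Pr) : Set F := { f | ∃ C ∈ Pg, f ∈ C.symbols }

def ProgramWF (ar : F → ℕ) (Pg : Program F Pr) : Prop := ∀ C ∈ Pg, C.WFC ar

def querySymbols (Q : Query F Pr) : Set F := { f | ∃ A ∈ Q, f ∈ A.symbols }

def queryVars (Q : Query F Pr) : Set ℕ := { n | ∃ A ∈ Q, n ∈ A.vars }

def QueryWF (ar : F → ℕ) (Q : Query F Pr) : Prop := ∀ A ∈ Q, A.WFA ar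

def substQuery (σ : ℕ → Tm F) (Q : Query F Pr) : Query F Pr := Q.map (Atom.subst σ)

/-- A first-order interpretation (for a language without equality). -/
structure Interp (F Pr : Type) where
  dom : Type
  nonempty : Nonempty dom
  fn : F → (k : ℕ) → (Fin k → dom) → dom
  rel : Pr → List dom → Prop

namespace Interp

def eval (I : Interp F Pr) (ρ : ℕ → I.dom) : Tm F → I.dom
  | .var n => ρ n
  | .app f k ts => I.fn f k (fun i => I.eval ρ (ts i))

def holdsAtom (I : Interp F Pr) (ρ : ℕ → I.dom) (A : Atom F Pr) : Prop :=
  I.rel A.pred (A.args.map (I.eval ρ))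

def holdsClause (I : Interp F Pr) (C : Clause F Pr) : Prop :=
  ∀ ρ, (∀ B ∈ C.body, I.holdsAtom ρ B) → I.holdsAtom ρ C.head

def isModel (I : Interp F Pr) (Pg : Program F Pr) : Prop := ∀ C ∈ Pg, I.holdsClause C

end Interp

/-- `P ⊨ Q`: logical consequence of the universal closure of the query. -/
def Entails (Pg : Program F Pr) (Q : Query F Pr) : Prop :=
  ∀ I : Interp F Pr, I.isModel Pg → ∀ ρ, ∀ A ∈ Q, I.holdsAtom ρ A

/-- A substitution mapping every variable to a ground term. -/
def GroundSub (σ : ℕ → Tm F) : Prop := ∀ n, (σ n).isGround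

/-- A grounding substitution by well-formed ground terms
(terms of the Herbrand universe for arities `ar`). -/
def WFGroundSub (ar : F → ℕ) (σ : ℕ → Tm F) : Prop :=
  ∀ n, (σ n).isGround ∧ (σ n).WF ar

/-- A Herbrand interpretation (set of ground atoms) that is a model of `Pg`. -/
def IsHerbrandModel (Pg : Program F Pr) (S : Set (Atom F Pr)) : Prop :=
  ∀ C ∈ Pg, ∀ σ : ℕ → Tm F, GroundSub σ →
    (∀ B ∈ C.body, B.subst σ ∈ S) → C.head.subst σ ∈ S

/-- The least Herbrand model `M_P`. -/
def leastHerbrand (Pg : Program F Pr) : Set (Atom F Pr) :=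
  ⋂₀ { S | IsHerbrandModel Pg S }

/-- `M_P ⊨ Q`: every ground instance of `Q` is true in the least Herbrand model. -/
def HoldsInM (Pg : Program F Pr) (Q : Query F Pr) : Prop :=
  ∀ σ : ℕ → Tm F, GroundSub σ → ∀ A ∈ Q, A.subst σ ∈ leastHerbrand Pg

/-- A Herbrand model over the Herbrand universe of well-formed ground terms. -/
def IsHerbrandModelWF (ar : F → ℕ) (Pg : Program F Pr) (S : Set (Atom F Pr)) : Prop :=
  ∀ C ∈ Pg, ∀ σ : ℕ → Tm F, WFGroundSub ar σ →
    (∀ B ∈ C.body, B.subst σ ∈ S) → C.head.subst σ ∈ S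

/-- The least Herbrand model `M_P` (over well-formed ground terms). -/
def leastHerbrandWF (ar : F → ℕ) (Pg : Program F Pr) : Set (Atom F Pr) :=
  ⋂₀ { S | IsHerbrandModelWF ar Pg S }

/-- `M_P ⊨ Q`, where ground instances are taken over the Herbrand universe of
well-formed ground terms. -/
def HoldsInMWF (ar : F → ℕ) (Pg : Program F Pr) (Q : Query F Pr) : Prop :=
  ∀ σ : ℕ → Tm F, WFGroundSub ar σ → ∀ A ∈ Q, A.subst σ ∈ leastHerbrandWF ar Pg

/-- The query contains no aliens w.r.t. `S` (no subterm of it is an alien). -/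
def QueryNoAliens (S : Set F) (Q : Query F Pr) : Prop :=
  ∀ A ∈ Q, ∀ t ∈ A.args, ∀ s ∈ t.subterms, ¬ IsAlien S s

/-- `Q'` is `Q` generalized for `S`: `Q'` contains no aliens w.r.t. `S` and `Q` is
obtained from `Q'` by a substitution (with domain among the variables of `Q'`)
mapping distinct variables to pairwise distinct aliens w.r.t. `S`. -/
def IsGenQuery (S : Set F) (Q' Q : Query F Pr) : Prop :=
  QueryNoAliens S Q' ∧
  ∃ (k : ℕ) (V : Fin k → ℕ) (t : Fin k → Tm F) (σ : ℕ → Tm F),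
    Function.Injective V ∧ Function.Injective t ∧ (∀ i, IsAlien S (t i)) ∧
    FiniteSub σ V t ∧ (∀ i, V i ∈ queryVars Q') ∧ Q = substQuery σ Q'


section AuxStuff

variable {F Pr : Type}

namespace Tm

theorem subst_comp (μ ρ : ℕ → Tm F) (t : Tm F) :
    (t.subst μ).subst ρ = t.subst (fun n => (μ n).subst ρ) := by
  induction t with
  | var n => rfl
  | app f k ts ih => simp only [subst]; exact congrArg _ (funext fun i => ih i)

theorem subst_congr {θ τ : ℕ → Tm F} {t : Tm F} (h : ∀ x ∈ t.vars, θ x = τ x) :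
    t.subst θ = t.subst τ := by
  induction t with
  | var n => exact h n (by simp [vars])
  | app f k ts ih =>
      simp only [subst]
      exact congrArg _ (funext fun i => ih i fun x hx =>
        h x (by simp only [vars, Set.mem_iUnion]; exact ⟨i, hx⟩))

theorem subst_id (t : Tm F) : t.subst Tm.var = t := by
  induction t with
  | var n => rfl
  | app f k ts ih => simp only [subst]; exact congrArg _ (funext fun i => ih i)

theorem subst_cancel {θ τ : ℕ → Tm F} {t : Tm F} (h : t.subst θ = t.subst τ) :
    ∀ x ∈ t.vars, θ x = τ x := by
  induction t with
  | var n => intro x hx; simp only [vars, Set.mem_singleton_iff] at hx; subst hx; exact h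
  | app f k ts ih =>
      intro x hx
      simp only [vars, Set.mem_iUnion] at hx
      obtain ⟨i, hi⟩ := hx
      simp only [subst, Tm.app.injEq, heq_eq_eq, true_and] at h
      exact ih i (congrFun h i) x hi

theorem isGround_subst {σ : ℕ → Tm F} (hσ : ∀ n, (σ n).isGround) (t : Tm F) :
    (t.subst σ).isGround := by
  induction t with
  | var n => exact hσ n
  | app f k ts ih =>
      simp only [subst, isGround, vars, Set.iUnion_eq_empty]
      exact fun i => ih i

theorem WF_subst {ar : F → ℕ} {σ : ℕ → Tm F} (hσ : ∀ n, (σ n).WF ar) {t : Tm F}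
    (ht : t.WF ar) : (t.subst σ).WF ar := by
  induction t with
  | var n => exact hσ n
  | app f k ts ih => exact ⟨ht.1, fun i => ih i (ht.2 i)⟩

theorem symbols_subst_subset {S : Set F} {σ : ℕ → Tm F} (hσ : ∀ n, (σ n).symbols ⊆ S)
    {t : Tm F} (ht : t.symbols ⊆ S) : (t.subst σ).symbols ⊆ S := by
  induction t with
  | var n => exact hσ n
  | app f k ts ih =>
      simp only [subst, symbols, Set.union_subset_iff, Set.iUnion_subset_iff]
      refine ⟨?_, fun i => ih i fun x hx => ht ?_⟩
      · exact fun x hx => ht (by simp only [symbols]; exact Set.mem_union_left _ hx)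
      · simp only [symbols, Set.mem_union, Set.mem_iUnion]; exact Or.inr ⟨i, hx⟩

theorem vars_finite (t : Tm F) : t.vars.Finite := by
  induction t with
  | var n => simp [vars]
  | app f k ts ih => exact Set.finite_iUnion ih

theorem symbols_finite (t : Tm F) : t.symbols.Finite := by
  induction t with
  | var n => simp [symbols]
  | app f k ts ih => exact (Set.finite_singleton _).union (Set.finite_iUnion ih)

theorem app0_eq (c : F) (ts ts' : Fin 0 → Tm F) : Tm.app c 0 ts = Tm.app c 0 ts' := by
  exact congrArg _ (funext fun i => i.elim0)

theorem ground_shape {ar : F → ℕ} {S : Set F} (hfun : ∀ f : F, 1 ≤ ar f → f ∈ S)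
    {t : Tm F} (hg : t.isGround) (hwf : t.WF ar) :
    (∃ f k ts, f ∈ S ∧ k = ar f ∧ t = Tm.app f k ts ∧ ∀ i, (ts i).isGround ∧ (ts i).WF ar) ∨
    (∃ c ts, c ∉ S ∧ ar c = 0 ∧ t = Tm.app c 0 ts) := by
  cases t with
  | var n => exact absurd hg (by simp [isGround, vars])
  | app f k ts =>
      obtain ⟨hk, hwf'⟩ := hwf
      by_cases hf : f ∈ S
      · left
        refine ⟨f, k, ts, hf, hk, rfl, fun i => ⟨?_, hwf' i⟩⟩
        simp only [isGround, vars, Set.iUnion_eq_empty] at hg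
        exact hg i
      · right
        have h0 : ar f = 0 := by
          by_contra h
          exact hf (hfun f (Nat.one_le_iff_ne_zero.mpr h))
        have hk0 : k = 0 := hk.trans h0
        subst hk0
        exact ⟨f, ts, hf, h0, rfl⟩

end Tm

open Classical in
/-- Abstraction: replace (0-ary) applications of symbols outside `S` by the variable
assigned to them by `y`. -/
noncomputable def ab (S : Set F) (y : F → ℕ) : Tm F → Tm F
  | .var n => .var n
  | .app f k ts => if f ∈ S then .app f k (fun i => ab S y (ts i)) else .var (y f)

theorem ab_symbols {S : Set F} {y : F → ℕ} (t : Tm F) : (ab S y t).symbols ⊆ S := by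
  induction t with
  | var n => simp [ab, Tm.symbols]
  | app f k ts ih =>
      by_cases hf : f ∈ S
      · simp only [ab, if_pos hf, Tm.symbols, Set.union_subset_iff, Set.iUnion_subset_iff]
        exact ⟨by simpa using hf, fun i => ih i⟩
      · simp [ab, if_neg hf, Tm.symbols]

theorem ab_WF {S : Set F} {y : F → ℕ} {ar : F → ℕ} {t : Tm F} (ht : t.WF ar) :
    (ab S y t).WF ar := by
  induction t with
  | var n => simp [ab, Tm.WF]
  | app f k ts ih =>
      by_cases hf : f ∈ S
      · simp only [ab, if_pos hf]
        exact ⟨ht.1, fun i => ih i (ht.2 i)⟩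
      · simp [ab, if_neg hf, Tm.WF]

theorem ab_vars_mono {S : Set F} {y : F → ℕ} {ar : F → ℕ}
    (hfun : ∀ f : F, 1 ≤ ar f → f ∈ S) {t : Tm F} (ht : t.WF ar) :
    t.vars ⊆ (ab S y t).vars := by
  induction t with
  | var n => simp [ab]
  | app f k ts ih =>
      by_cases hf : f ∈ S
      · simp only [ab, if_pos hf, Tm.vars]
        exact Set.iUnion_mono fun i => ih i (ht.2 i)
      · have h0 : ar f = 0 := by
          by_contra h
          exact hf (hfun f (Nat.one_le_iff_ne_zero.mpr h))
        have hk0 : k = 0 := ht.1.trans h0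
        subst hk0
        simp only [Tm.vars]
        intro x hx
        simp only [Set.mem_iUnion] at hx
        exact (hx.choose).elim0

theorem ab_vars_subset {S : Set F} {y : F → ℕ} {t : Tm F} :
    (ab S y t).vars ⊆ t.vars ∪ y '' (t.symbols \ S) := by
  induction t with
  | var n => simp [ab, Tm.vars]
  | app f k ts ih =>
      by_cases hf : f ∈ S
      · simp only [ab, if_pos hf, Tm.vars]
        intro x hx
        simp only [Set.mem_iUnion] at hx
        obtain ⟨i, hi⟩ := hx
        rcases ih i hi with h | h
        · exact Or.inl (by simp only [Tm.vars, Set.mem_iUnion]; exact ⟨i, h⟩)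
        · obtain ⟨c, hc, rfl⟩ := h
          refine Or.inr ⟨c, ⟨?_, hc.2⟩, rfl⟩
          simp only [Tm.symbols, Set.mem_union, Set.mem_iUnion]
          exact Or.inr ⟨i, hc.1⟩
      · simp only [ab, if_neg hf, Tm.vars]
        intro x hx
        simp only [Set.mem_singleton_iff] at hx
        subst hx
        refine Or.inr ⟨f, ⟨?_, hf⟩, rfl⟩
        simp [Tm.symbols]

theorem ab_symbol_var {S : Set F} {y : F → ℕ} {ar : F → ℕ}
    (hfun : ∀ f : F, 1 ≤ ar f → f ∈ S) {t : Tm F} (ht : t.WF ar) {f : F}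
    (hf : f ∈ t.symbols) (hfS : f ∉ S) : y f ∈ (ab S y t).vars := by
  induction t with
  | var n => simp [Tm.symbols] at hf
  | app g k ts ih =>
      by_cases hg : g ∈ S
      · simp only [Tm.symbols, Set.mem_union, Set.mem_singleton_iff, Set.mem_iUnion] at hf
        rcases hf with rfl | ⟨i, hi⟩
        · exact absurd hg hfS
        · simp only [ab, if_pos hg, Tm.vars, Set.mem_iUnion]
          exact ⟨i, ih i (ht.2 i) hi⟩
      · have h0 : ar g = 0 := by
          by_contra h
          exact hg (hfun g (Nat.one_le_iff_ne_zero.mpr h))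
        have hk0 : k = 0 := ht.1.trans h0
        subst hk0
        simp only [Tm.symbols, Set.mem_union, Set.mem_singleton_iff, Set.mem_iUnion] at hf
        rcases hf with rfl | ⟨i, _⟩
        · simp [ab, if_neg hg, Tm.vars]
        · exact i.elim0

theorem ab_subst {S : Set F} {y : F → ℕ} {ar : F → ℕ} {τ : ℕ → Tm F}
    (hfun : ∀ f : F, 1 ≤ ar f → f ∈ S) {t : Tm F} (ht : t.WF ar)
    (hτ1 : ∀ n ∈ t.vars, τ n = .var n)
    (hτ2 : ∀ f ∈ t.symbols, f ∉ S → ∃ ts0, τ (y f) = .app f 0 ts0) :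
    (ab S y t).subst τ = t := by
  induction t with
  | var n => exact hτ1 n (by simp [Tm.vars])
  | app f k ts ih =>
      by_cases hf : f ∈ S
      · simp only [ab, if_pos hf, Tm.subst]
        refine congrArg _ (funext fun i => ih i (ht.2 i) ?_ ?_)
        · exact fun n hn => hτ1 n (by simp only [Tm.vars, Set.mem_iUnion]; exact ⟨i, hn⟩)
        · exact fun g hg hgS => hτ2 g
            (by simp only [Tm.symbols, Set.mem_union, Set.mem_iUnion]; exact Or.inr ⟨i, hg⟩) hgS
      · have h0 : ar f = 0 := by
          by_contra h
          exact hf (hfun f (Nat.one_le_iff_ne_zero.mpr h))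
        have hk0 : k = 0 := ht.1.trans h0
        subst hk0
        obtain ⟨ts0, hts0⟩ := hτ2 f (by simp [Tm.symbols]) hf
        simp only [ab, if_neg hf, Tm.subst, hts0]
        exact Tm.app0_eq f ts0 ts

namespace Atom

theorem subst_comp (μ ρ : ℕ → Tm F) (B : Atom F Pr) :
    (B.subst μ).subst ρ = B.subst (fun n => (μ n).subst ρ) := by
  simp only [Atom.subst, List.map_map]
  exact congrArg _ (List.map_congr_left fun t _ => Tm.subst_comp μ ρ t)

theorem subst_congr {θ τ : ℕ → Tm F} {B : Atom F Pr} (h : ∀ x ∈ B.vars, θ x = τ x) :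
    B.subst θ = B.subst τ := by
  simp only [Atom.subst]
  refine congrArg _ (List.map_congr_left fun t ht => Tm.subst_congr fun x hx => ?_)
  exact h x ⟨t, ht, hx⟩

theorem subst_cancel {θ τ : ℕ → Tm F} {B : Atom F Pr} (h : B.subst θ = B.subst τ) :
    ∀ x ∈ B.vars, θ x = τ x := by
  intro x hx
  obtain ⟨t, ht, hxt⟩ := hx
  simp only [Atom.subst, Atom.mk.injEq, true_and] at h
  have key : ∀ (l : List (Tm F)), l.map (Tm.subst θ) = l.map (Tm.subst τ) →
      ∀ a ∈ l, a.subst θ = a.subst τ := by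
    intro l
    induction l with
    | nil => intro _ a ha; simp at ha
    | cons b l ihl =>
        intro h a ha
        simp only [List.map_cons, List.cons.injEq] at h
        rcases List.mem_cons.mp ha with rfl | ha'
        · exact h.1
        · exact ihl h.2 a ha'
  exact Tm.subst_cancel (key B.args h t ht) x hxt

end Atom

theorem atom_vars_finite (B : Atom F Pr) : B.vars.Finite := by
  have : B.vars = ⋃ t ∈ B.args, t.vars := by
    ext x; simp [Atom.vars]
  rw [this]
  exact B.args.finite_toSet.biUnion fun t _ => t.vars_finite

theorem atom_symbols_finite (B : Atom F Pr) : B.symbols.Finite := by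
  have : B.symbols = ⋃ t ∈ B.args, t.symbols := by
    ext x; simp [Atom.symbols]
  rw [this]
  exact B.args.finite_toSet.biUnion fun t _ => t.symbols_finite

/-- The "free term" interpretation associated with a program: domain is all terms,
function symbols are interpreted freely, and a relation holds of a tuple iff the
corresponding atom is a substitution instance of the head of some fact of `P`. -/
def termInterp (P : Program F Pr) : Interp F Pr where
  dom := Tm F
  nonempty := ⟨.var 0⟩
  fn := fun f k ts => .app f k ts
  rel := fun q ts => ∃ C ∈ P, C.body = [] ∧ ∃ ρ, C.head.subst ρ = ⟨q, ts⟩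

theorem termInterp_eval (P : Program F Pr) (ρ : ℕ → Tm F) (t : Tm F) :
    (termInterp P).eval ρ t = t.subst ρ := by
  induction t with
  | var n => rfl
  | app f k ts ih =>
      simp only [Interp.eval, Tm.subst, termInterp]
      exact congrArg _ (funext fun i => ih i)

theorem termInterp_holdsAtom (P : Program F Pr) (ρ : ℕ → Tm F) (B : Atom F Pr) :
    (termInterp P).holdsAtom ρ B ↔ ∃ C ∈ P, C.body = [] ∧ ∃ ρ', C.head.subst ρ' = B.subst ρ := by
  simp only [Interp.holdsAtom]
  have : B.args.map ((termInterp P).eval ρ) = B.args.map (Tm.subst ρ) :=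
    List.map_congr_left fun t _ => termInterp_eval P ρ t
  rw [this]
  constructor
  · rintro ⟨C, hC, hb, ρ', h⟩; exact ⟨C, hC, hb, ρ', h⟩
  · rintro ⟨C, hC, hb, ρ', h⟩; exact ⟨C, hC, hb, ρ', h⟩

end AuxStuff

/-- necessity of the sufficient condition: if the equivalence
`M_P ⊨ Q ↔ P ⊨ Q` holds for every finite program `P` whose set of occurring function
symbols is exactly `F₀`, and the atoms of `Q` have pairwise distinct predicate symbols,
then either some non-constant function symbol lies outside `F₀`, or for each atom `A`
of `Q` with `k` distinct variables there are at least `k` constants outside `F₀` not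
occurring in `A`. -/
theorem stmt_14 {F Pr : Type} (ar : F → ℕ) (F₀ : Set F) (hF₀fin : F₀.Finite)
    (hHU : ∃ g : Tm F, g.isGround ∧ g.WF ar)
    (Q : Query F Pr) (hQwf : QueryWF ar Q)
    (hdistinct : (Q.map Atom.pred).Nodup)
    (hyp : ∀ P : Program F Pr, P.Finite → ProgramWF ar P → progSymbols P = F₀ →
      (HoldsInMWF ar P Q ↔ Entails P Q)) :
    (∃ f : F, 1 ≤ ar f ∧ f ∉ F₀) ∨
      ∀ A ∈ Q, ∃ (k : ℕ) (W : Fin k → ℕ), Function.Injective W ∧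
        A.vars = Set.range W ∧
        ∃ c : Fin k → F, Function.Injective c ∧
          ∀ i, ar (c i) = 0 ∧ c i ∉ F₀ ∧ c i ∉ A.symbols := by
  classical
  by_cases hfun : ∃ f : F, 1 ≤ ar f ∧ f ∉ F₀
  · exact Or.inl hfun
  right
  push_neg at hfun
  have hfun' : ∀ f : F, 1 ≤ ar f → f ∈ F₀ := hfun
  obtain ⟨g, hg_ground, hg_wf⟩ := hHU
  intro A hA
  -- enumerate the (finitely many) variables of A
  have hVfin := atom_vars_finite A
  set s : Finset ℕ := hVfin.toFinset with hs
  set k := s.card with hk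
  set W : Fin k → ℕ := fun i => ((s.orderIsoOfFin rfl) i : ℕ) with hW
  have hWinj : Function.Injective W := fun i j hij =>
    (s.orderIsoOfFin rfl).injective (Subtype.ext hij)
  have hWrange : A.vars = Set.range W := by
    ext x
    constructor
    · intro hx
      have hx' : x ∈ s := hVfin.mem_toFinset.mpr hx
      obtain ⟨i, hi⟩ := (s.orderIsoOfFin rfl).surjective ⟨x, hx'⟩
      exact ⟨i, by rw [hW]; exact congrArg Subtype.val hi⟩
    · rintro ⟨i, rfl⟩
      exact hVfin.mem_toFinset.mp ((s.orderIsoOfFin rfl) i).2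
  refine ⟨k, W, hWinj, hWrange, ?_⟩
  by_cases hC : ∃ c : Fin k → F, Function.Injective c ∧
      ∀ i, ar (c i) = 0 ∧ c i ∉ F₀ ∧ c i ∉ A.symbols
  · exact hC
  exfalso
  have hWmem : ∀ i, W i ∈ A.vars := fun i => hWrange ▸ ⟨i, rfl⟩
  set N : ℕ := s.sup id + 1 with hN
  have hvlt : ∀ x ∈ A.vars, x < N :=
    fun x hx => Nat.lt_succ_of_le (Finset.le_sup (f := id) (hVfin.mem_toFinset.mpr hx))
  -- the non-F₀ constants occurring in A
  have hSfin := atom_symbols_finite A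
  set na : Finset F := hSfin.toFinset.filter (· ∉ F₀) with hna
  have hna_mem : ∀ c, c ∈ na ↔ c ∈ A.symbols ∧ c ∉ F₀ := by
    intro c; simp [hna, Finset.mem_filter, hSfin.mem_toFinset]
  set y : F → ℕ := fun c => if h : c ∈ na then N + (na.equivFin ⟨c, h⟩ : Fin na.card) else 0
    with hy
  set M : ℕ := N + na.card with hM
  have hy_ge : ∀ c ∈ na, N ≤ y c ∧ y c < M := by
    intro c hc
    rw [hy]; simp only [dif_pos hc]
    exact ⟨Nat.le_add_right _ _, by rw [hM]; exact Nat.add_lt_add_left (Fin.is_lt _) _⟩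
  have hy_inj : ∀ c ∈ na, ∀ c' ∈ na, y c = y c' → c = c' := by
    intro c hc c' hc' h
    rw [hy] at h; simp only [dif_pos hc, dif_pos hc'] at h
    have := Nat.add_left_cancel h
    have := na.equivFin.injective (Fin.ext this)
    exact congrArg Subtype.val this
  have hNM : N ≤ M := Nat.le_add_right _ _
  -- the "TAU" family of substitutions
  set TAU : (ℕ → Tm F) → (ℕ → Tm F) := fun base n =>
    if h : ∃ c, c ∈ na ∧ y c = n then .app h.choose 0 Fin.elim0 else base n with hTAU
  have hTAU_lt : ∀ (base : ℕ → Tm F) (n : ℕ), n < M → N ≤ M → n < N → TAU base n = base n := by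
    intro base n _ _ hn
    rw [hTAU]
    refine dif_neg ?_
    rintro ⟨c, hc, rfl⟩
    exact absurd hn (Nat.not_lt.mpr (hy_ge c hc).1)
  have hTAU_lt' : ∀ (base : ℕ → Tm F) (n : ℕ), n < N → TAU base n = base n := by
    intro base n hn
    rw [hTAU]
    refine dif_neg ?_
    rintro ⟨c, hc, rfl⟩
    exact absurd hn (Nat.not_lt.mpr (hy_ge c hc).1)
  have hTAU_y : ∀ (base : ℕ → Tm F) (c : F), c ∈ na →
      TAU base (y c) = Tm.app c 0 Fin.elim0 := by
    intro base c hc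
    have hex : ∃ c', c' ∈ na ∧ y c' = y c := ⟨c, hc, rfl⟩
    rw [hTAU]
    simp only [dif_pos hex]
    exact congrArg (fun d => Tm.app d 0 Fin.elim0)
      (hy_inj _ hex.choose_spec.1 c hc hex.choose_spec.2)
  set τ : ℕ → Tm F := TAU Tm.var with hτ
  -- the abstraction of A
  set A' : Atom F Pr := ⟨A.pred, A.args.map (ab F₀ y)⟩ with hA'
  have hargmem : ∀ t ∈ A.args, t.WF ar ∧ t.vars ⊆ A.vars ∧ t.symbols ⊆ A.symbols := by
    intro t ht
    exact ⟨hQwf A hA t ht, fun x hx => ⟨t, ht, hx⟩, fun f hf => ⟨t, ht, hf⟩⟩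
  have hA'τ : A'.subst τ = A := by
    rw [hA']
    simp only [Atom.subst, List.map_map]
    refine congrArg _ ?_
    rw [show A.args = A.args.map id from (List.map_id _).symm]
    rw [List.map_map]
    refine List.map_congr_left fun t ht => ?_
    obtain ⟨htWF, htv, hts⟩ := hargmem t ht
    refine ab_subst hfun' htWF ?_ ?_
    · intro n hn
      rw [hτ]
      exact hTAU_lt' Tm.var n (hvlt n (htv hn))
    · intro f hf hfS
      refine ⟨Fin.elim0, ?_⟩
      rw [hτ]
      exact hTAU_y Tm.var f ((hna_mem f).mpr ⟨hts hf, hfS⟩)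
  have hA'WF : A'.WFA ar := by
    intro t ht
    rw [hA'] at ht
    simp only [List.mem_map] at ht
    obtain ⟨t0, ht0, rfl⟩ := ht
    exact ab_WF (hargmem t0 ht0).1
  have hA'sym : A'.symbols ⊆ F₀ := by
    rintro f ⟨t, ht, hf⟩
    rw [hA'] at ht
    simp only [List.mem_map] at ht
    obtain ⟨t0, _, rfl⟩ := ht
    exact ab_symbols t0 hf
  have hA'vars_lt : ∀ x ∈ A'.vars, x < M := by
    rintro x ⟨t, ht, hx⟩
    rw [hA'] at ht
    simp only [List.mem_map] at ht
    obtain ⟨t0, ht0, rfl⟩ := ht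
    rcases ab_vars_subset hx with h | ⟨c, hc, rfl⟩
    · exact lt_of_lt_of_le (hvlt x ((hargmem t0 ht0).2.1 h)) hNM
    · exact (hy_ge c ((hna_mem c).mpr ⟨(hargmem t0 ht0).2.2 hc.1, hc.2⟩)).2
  have hA'vars_sup : A.vars ⊆ A'.vars := by
    rintro x ⟨t, ht, hx⟩
    refine ⟨ab F₀ y t, ?_, ab_vars_mono hfun' (hargmem t ht).1 hx⟩
    rw [hA']
    exact List.mem_map.mpr ⟨t, ht, rfl⟩
  have hyvar : ∀ c ∈ na, y c ∈ A'.vars := by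
    intro c hc
    obtain ⟨hcA, hcF⟩ := (hna_mem c).mp hc
    obtain ⟨t, ht, hct⟩ := hcA
    refine ⟨ab F₀ y t, ?_, ab_symbol_var hfun' (hargmem t ht).1 hct hcF⟩
    rw [hA']
    exact List.mem_map.mpr ⟨t, ht, rfl⟩
  -- the program
  set genA : Atom F Pr → Atom F Pr :=
    fun B => ⟨B.pred, (List.range B.args.length).map Tm.var⟩ with hgenA
  set TfH : F → Atom F Pr := fun f => ⟨A.pred, [Tm.app f (ar f) (fun l => .var (l : ℕ))]⟩
    with hTfH
  set P : Program F Pr :=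
    (fun p : Fin k × Fin k =>
        (⟨A'.subst (sub1 (W p.1) (.var (W p.2))), []⟩ : Clause F Pr)) '' {p | p.1 ≠ p.2}
    ∪ (fun q : Fin k × F =>
        (⟨A'.subst (sub1 (W q.1) (.app q.2 (ar q.2) (fun l => .var (M + (l : ℕ))))), []⟩ :
          Clause F Pr)) '' (Set.univ ×ˢ F₀)
    ∪ (fun q : Fin k × F =>
        (⟨A'.subst (sub1 (W q.1) (.var (y q.2))), []⟩ : Clause F Pr)) ''
          (Set.univ ×ˢ (na : Set F))
    ∪ (fun B => (⟨genA B, []⟩ : Clause F Pr)) '' {B | B ∈ Q ∧ B ≠ A}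
    ∪ (fun f => (⟨TfH f, [TfH f]⟩ : Clause F Pr)) '' F₀ with hP
  have hPfin : P.Finite := by
    rw [hP]
    refine ((((Set.Finite.image _ (Set.toFinite _)).union
      ((Set.finite_univ.prod hF₀fin).image _)).union
      ((Set.finite_univ.prod na.finite_toSet).image _)).union
      ((Q.finite_toSet.subset fun B hB => hB.1).image _)).union (hF₀fin.image _)
  have hPcases : ∀ C ∈ P,
      (∃ i j : Fin k, i ≠ j ∧ C = ⟨A'.subst (sub1 (W i) (.var (W j))), []⟩) ∨
      (∃ (i : Fin k) (f : F), f ∈ F₀ ∧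
        C = ⟨A'.subst (sub1 (W i) (.app f (ar f) (fun l => .var (M + (l : ℕ))))), []⟩) ∨
      (∃ (i : Fin k) (c : F), c ∈ na ∧ C = ⟨A'.subst (sub1 (W i) (.var (y c))), []⟩) ∨
      (∃ B, B ∈ Q ∧ B ≠ A ∧ C = ⟨genA B, []⟩) ∨
      (∃ f, f ∈ F₀ ∧ C = ⟨TfH f, [TfH f]⟩) := by
    intro C hC
    rw [hP] at hC
    rcases hC with ((((⟨p, hp, rfl⟩ | ⟨q, hq, rfl⟩) | ⟨q, hq, rfl⟩) | ⟨B, hB, rfl⟩) | ⟨f, hf, rfl⟩)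
    · exact Or.inl ⟨p.1, p.2, hp, rfl⟩
    · exact Or.inr (Or.inl ⟨q.1, q.2, hq.2, rfl⟩)
    · exact Or.inr (Or.inr (Or.inl ⟨q.1, q.2, hq.2, rfl⟩))
    · exact Or.inr (Or.inr (Or.inr (Or.inl ⟨B, hB.1, hB.2, rfl⟩)))
    · exact Or.inr (Or.inr (Or.inr (Or.inr ⟨f, hf, rfl⟩)))
  -- membership helpers
  have hP_D : ∀ i j : Fin k, i ≠ j →
      (⟨A'.subst (sub1 (W i) (.var (W j))), []⟩ : Clause F Pr) ∈ P := by
    intro i j hij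
    rw [hP]
    exact Set.mem_union_left _ (Set.mem_union_left _ (Set.mem_union_left _
      (Set.mem_union_left _ ⟨(i, j), hij, rfl⟩)))
  have hP_E : ∀ (i : Fin k) (f : F), f ∈ F₀ →
      (⟨A'.subst (sub1 (W i) (.app f (ar f) (fun l => .var (M + (l : ℕ))))), []⟩ :
        Clause F Pr) ∈ P := by
    intro i f hf
    rw [hP]
    exact Set.mem_union_left _ (Set.mem_union_left _ (Set.mem_union_left _
      (Set.mem_union_right _ ⟨(i, f), ⟨Set.mem_univ _, hf⟩, rfl⟩)))
  have hP_G : ∀ (i : Fin k) (c : F), c ∈ na →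
      (⟨A'.subst (sub1 (W i) (.var (y c))), []⟩ : Clause F Pr) ∈ P := by
    intro i c hc
    rw [hP]
    exact Set.mem_union_left _ (Set.mem_union_left _
      (Set.mem_union_right _ ⟨(i, c), ⟨Set.mem_univ _, hc⟩, rfl⟩))
  have hP_gen : ∀ B, B ∈ Q → B ≠ A → (⟨genA B, []⟩ : Clause F Pr) ∈ P := by
    intro B h1 h2
    rw [hP]
    exact Set.mem_union_left _ (Set.mem_union_right _ ⟨B, ⟨h1, h2⟩, rfl⟩)
  have hP_T : ∀ f ∈ F₀, (⟨TfH f, [TfH f]⟩ : Clause F Pr) ∈ P := by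
    intro f hf
    rw [hP]
    exact Set.mem_union_right _ ⟨f, hf, rfl⟩
  -- well-formedness of the program
  have hWFA_subst : ∀ (σ' : ℕ → Tm F), (∀ n, (σ' n).WF ar) →
      ∀ B : Atom F Pr, B.WFA ar → (B.subst σ').WFA ar := by
    intro σ' hσ' B hB t ht
    simp only [Atom.subst, List.mem_map] at ht
    obtain ⟨t0, ht0, rfl⟩ := ht
    exact Tm.WF_subst hσ' (hB t0 ht0)
  have hsub1WF : ∀ (X : ℕ) (u : Tm F), u.WF ar → ∀ n, ((sub1 X u) n).WF ar := by
    intro X u hu n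
    simp only [sub1]
    split
    · exact hu
    · simp [Tm.WF]
  have hWF_P : ProgramWF ar P := by
    intro C hC
    rcases hPcases C hC with ⟨i, j, _, rfl⟩ | ⟨i, f, hf, rfl⟩ | ⟨i, c, hc, rfl⟩ |
      ⟨B, hBQ, _, rfl⟩ | ⟨f, _, rfl⟩
    · exact ⟨hWFA_subst _ (hsub1WF _ _ (by simp [Tm.WF])) A' hA'WF, by intro x hx; simp at hx⟩
    · refine ⟨hWFA_subst _ (hsub1WF _ _ ?_) A' hA'WF, by intro x hx; simp at hx⟩
      exact ⟨rfl, fun l => by simp [Tm.WF]⟩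
    · exact ⟨hWFA_subst _ (hsub1WF _ _ (by simp [Tm.WF])) A' hA'WF, by intro x hx; simp at hx⟩
    · refine ⟨?_, by intro x hx; simp at hx⟩
      intro t ht
      rw [hgenA] at ht
      simp only [List.mem_map] at ht
      obtain ⟨m, _, rfl⟩ := ht
      simp [Tm.WF]
    · have hTWF : (TfH f).WFA ar := by
        intro t ht
        rw [hTfH] at ht
        simp only [List.mem_singleton] at ht
        subst ht
        exact ⟨rfl, fun l => by simp [Tm.WF]⟩
      exact ⟨hTWF, by intro x hx; simp only [List.mem_singleton] at hx; subst hx; exact hTWF⟩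
  -- the program's symbols are exactly F₀
  have hsubsym : ∀ (σ' : ℕ → Tm F), (∀ n, (σ' n).symbols ⊆ F₀) →
      ∀ x, x ∈ (A'.subst σ').symbols → x ∈ F₀ := by
    rintro σ' hσ' x ⟨t, ht, hx⟩
    simp only [Atom.subst, List.mem_map] at ht
    obtain ⟨t0, ht0, rfl⟩ := ht
    refine Tm.symbols_subst_subset hσ' (fun z hz => hA'sym ⟨t0, ?_, hz⟩) hx
    rw [hA']
    exact ht0
  have hsub1sym : ∀ (X : ℕ) (u : Tm F), u.symbols ⊆ F₀ → ∀ n, ((sub1 X u) n).symbols ⊆ F₀ := by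
    intro X u hu n
    simp only [sub1]
    split
    · exact hu
    · simp [Tm.symbols]
  have hsymbols : progSymbols P = F₀ := by
    apply Set.Subset.antisymm
    · rintro x ⟨C, hC, hxC⟩
      rcases hPcases C hC with ⟨i, j, _, rfl⟩ | ⟨i, f, hf, rfl⟩ | ⟨i, c, hc, rfl⟩ |
        ⟨B, hBQ, _, rfl⟩ | ⟨f, hf, rfl⟩
      · rcases hxC with h | h
        · exact hsubsym _ (hsub1sym _ _ (by simp [Tm.symbols])) x h
        · obtain ⟨B', hB', _⟩ := h; simp at hB'
      · rcases hxC with h | h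
        · refine hsubsym _ (hsub1sym _ _ ?_) x h
          intro z hz
          simp only [Tm.symbols, Set.mem_union, Set.mem_singleton_iff, Set.mem_iUnion] at hz
          rcases hz with rfl | ⟨l, hl⟩
          · exact hf
          · simp [Tm.symbols] at hl
        · obtain ⟨B', hB', _⟩ := h; simp at hB'
      · rcases hxC with h | h
        · exact hsubsym _ (hsub1sym _ _ (by simp [Tm.symbols])) x h
        · obtain ⟨B', hB', _⟩ := h; simp at hB'
      · rcases hxC with h | h
        · obtain ⟨t, ht, hxt⟩ := h
          rw [hgenA] at ht
          simp only [List.mem_map] at ht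
          obtain ⟨m, _, rfl⟩ := ht
          simp [Tm.symbols] at hxt
        · obtain ⟨B', hB', _⟩ := h; simp at hB'
      · have hTsym : ∀ z ∈ (TfH f).symbols, z ∈ F₀ := by
          rintro z ⟨t, ht, hzt⟩
          rw [hTfH] at ht
          simp only [List.mem_singleton] at ht
          subst ht
          simp only [Tm.symbols, Set.mem_union, Set.mem_singleton_iff, Set.mem_iUnion] at hzt
          rcases hzt with rfl | ⟨l, hl⟩
          · exact hf
          · simp [Tm.symbols] at hl
        rcases hxC with h | h
        · exact hTsym x h
        · obtain ⟨B', hB', hxB'⟩ := h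
          simp only [List.mem_singleton] at hB'
          subst hB'
          exact hTsym x hxB'
    · intro f hf
      refine ⟨⟨TfH f, [TfH f]⟩, hP_T f hf, Or.inl ?_⟩
      refine ⟨Tm.app f (ar f) (fun l => .var (l : ℕ)), ?_, ?_⟩
      · rw [hTfH]; exact List.mem_singleton_self _
      · simp [Tm.symbols]
  -- key substitution identity
  have hστ : ∀ σ0 : ℕ → Tm F, A.subst σ0 = A'.subst (TAU σ0) := by
    intro σ0
    conv_lhs => rw [← hA'τ]
    rw [Atom.subst_comp]
    have hfe : (fun n => (τ n).subst σ0) = TAU σ0 := by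
      funext n
      simp only [hτ, hTAU]
      by_cases h : ∃ c, c ∈ na ∧ y c = n
      · simp only [dif_pos h, Tm.subst]
        exact Tm.app0_eq _ _ _
      · simp only [dif_neg h, Tm.subst]
    rw [hfe]
  have hTAUground : ∀ σ0, WFGroundSub ar σ0 → WFGroundSub ar (TAU σ0) := by
    intro σ0 hσ0 n
    simp only [hTAU]
    by_cases h : ∃ c, c ∈ na ∧ y c = n
    · simp only [dif_pos h]
      have hc := h.choose_spec.1
      have h0 : ar h.choose = 0 := by
        by_contra hh
        exact ((hna_mem _).mp hc).2 (hfun' _ (Nat.one_le_iff_ne_zero.mpr hh))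
      refine ⟨?_, h0.symm, fun i => i.elim0⟩
      simp [Tm.isGround, Tm.vars]
    · simp only [dif_neg h]
      exact hσ0 n
  -- M_P ⊨ Q
  have hHolds : HoldsInMWF ar P Q := by
    intro σ hσ B hB
    refine Set.mem_sInter.mpr fun S hS => ?_
    have hfact : ∀ (H : Atom F Pr), (⟨H, []⟩ : Clause F Pr) ∈ P →
        ∀ σ', WFGroundSub ar σ' → H.subst σ' ∈ S := by
      intro H hCP σ' hσ'
      exact hS _ hCP σ' hσ' (by intro B' hB'; simp at hB')
    by_cases hBA : B = A
    · subst hBA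
      by_cases hE : ∃ (i : Fin k) (f : F) (kk : ℕ) (ts : Fin kk → Tm F), f ∈ F₀ ∧ kk = ar f ∧
          σ (W i) = Tm.app f kk ts ∧ ∀ l, (ts l).isGround ∧ (ts l).WF ar
      · obtain ⟨i, f, kk, ts, hfF, hkk, hvi, hts⟩ := hE
        subst hkk
        set σ' : ℕ → Tm F := fun n =>
          if M ≤ n then (if h : n - M < ar f then ts ⟨n - M, h⟩ else g) else TAU σ n
          with hσ'def
        have hσ'g : WFGroundSub ar σ' := by
          intro n
          simp only [hσ'def]
          split
          · split
            · exact ⟨(hts _).1, (hts _).2⟩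
            · exact ⟨hg_ground, hg_wf⟩
          · exact hTAUground σ hσ n
        have hmem := hfact _ (hP_E i f hfF) σ' hσ'g
        rw [Atom.subst_comp] at hmem
        have heq : A'.subst
            (fun n => ((sub1 (W i) (Tm.app f (ar f) fun l => Tm.var (M + (l : ℕ)))) n).subst σ') =
            A'.subst (TAU σ) := by
          refine Atom.subst_congr fun x hx => ?_
          by_cases hxi : x = W i
          · subst hxi
            simp only [sub1, if_pos rfl, Tm.subst]
            rw [hTAU_lt' σ (W i) (hvlt _ (hWmem i)), hvi]
            refine congrArg _ (funext fun l => ?_)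
            simp only [hσ'def, Tm.subst]
            rw [if_pos (Nat.le_add_right _ _)]
            have h1 : M + (l : ℕ) - M = (l : ℕ) := by omega
            simp only [h1]
            rw [dif_pos l.is_lt]
          · simp only [sub1, if_neg hxi, Tm.subst, hσ'def]
            rw [if_neg (Nat.not_le.mpr (hA'vars_lt x hx))]
        rw [heq, ← hστ σ] at hmem
        exact hmem
      · have hall : ∀ i : Fin k, ∃ (c : F) (ts : Fin 0 → Tm F),
            c ∉ F₀ ∧ ar c = 0 ∧ σ (W i) = Tm.app c 0 ts := by
          intro i
          rcases Tm.ground_shape hfun' (hσ (W i)).1 (hσ (W i)).2 with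
            ⟨f, kk, ts, h1, h2, h3, h4⟩ | ⟨c, ts, h1, h2, h3⟩
          · exact absurd ⟨i, f, kk, ts, h1, h2, h3, h4⟩ hE
          · exact ⟨c, ts, h1, h2, h3⟩
        choose c cts hc1 hc2 hc3 using hall
        by_cases hG : ∃ i, c i ∈ B.symbols
        · obtain ⟨i, hciA⟩ := hG
          have hcna : c i ∈ na := (hna_mem _).mpr ⟨hciA, hc1 i⟩
          have hmem := hfact _ (hP_G i (c i) hcna) (TAU σ) (hTAUground σ hσ)
          rw [Atom.subst_comp] at hmem
          have heq : A'.subst (fun n => ((sub1 (W i) (.var (y (c i)))) n).subst (TAU σ)) =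
              A'.subst (TAU σ) := by
            refine Atom.subst_congr fun x hx => ?_
            by_cases hxi : x = W i
            · subst hxi
              simp only [sub1, if_pos rfl, if_true, Tm.subst]
              rw [hTAU_y σ (c i) hcna, hTAU_lt' σ (W i) (hvlt _ (hWmem i)), hc3 i]
              exact Tm.app0_eq _ _ _
            · simp only [sub1, if_neg hxi, Tm.subst]
          rw [heq, ← hστ σ] at hmem
          exact hmem
        · have hninj : ¬ Function.Injective c := by
            intro hinj
            exact hC ⟨c, hinj, fun i => ⟨hc2 i, hc1 i, fun hm => hG ⟨i, hm⟩⟩⟩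
          obtain ⟨i, j, hcij, hij⟩ := Function.not_injective_iff.mp hninj
          have hmem := hfact _ (hP_D i j hij) (TAU σ) (hTAUground σ hσ)
          rw [Atom.subst_comp] at hmem
          have heq : A'.subst (fun n => ((sub1 (W i) (.var (W j))) n).subst (TAU σ)) =
              A'.subst (TAU σ) := by
            refine Atom.subst_congr fun x hx => ?_
            by_cases hxi : x = W i
            · subst hxi
              simp only [sub1, if_pos rfl, if_true, Tm.subst]
              rw [hTAU_lt' σ (W j) (hvlt _ (hWmem j)), hTAU_lt' σ (W i) (hvlt _ (hWmem i)),
                hc3 i, hc3 j, hcij]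
              exact Tm.app0_eq _ _ _
            · simp only [sub1, if_neg hxi, Tm.subst]
          rw [heq, ← hστ σ] at hmem
          exact hmem
    · set nn := B.args.length with hnn
      set σ' : ℕ → Tm F := fun m => if h : m < nn then (B.args.get ⟨m, h⟩).subst σ else g
        with hσ'def
      have hσ'g : WFGroundSub ar σ' := by
        intro m
        simp only [hσ'def]
        split
        · exact ⟨Tm.isGround_subst (fun x => (hσ x).1) _,
            Tm.WF_subst (fun x => (hσ x).2) (hQwf B hB _ (B.args.get_mem _))⟩
        · exact ⟨hg_ground, hg_wf⟩
      have hmem := hfact _ (hP_gen B hB hBA) σ' hσ'g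
      have heq : (genA B).subst σ' = B.subst σ := by
        rw [hgenA]
        simp only [Atom.subst, List.map_map]
        refine congrArg _ ?_
        refine List.ext_getElem (by simp [hnn]) fun m h1 h2 => ?_
        simp only [List.getElem_map, List.getElem_range, Function.comp]
        have hm : m < nn := by simpa [hnn] using h2
        show σ' m = (B.args[m]'(by simpa [hnn] using hm)).subst σ
        simp only [hσ'def]
        rw [dif_pos hm]
        rfl
      rw [heq] at hmem
      exact hmem
  -- P does not entail Q
  have hEnt := (hyp P hPfin hWF_P hsymbols).mp hHolds
  have hbodyP : ∀ C ∈ P, C.body = [] ∨ C.body = [C.head] := by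
    intro C hC
    rcases hPcases C hC with ⟨_, _, _, rfl⟩ | ⟨_, _, _, rfl⟩ | ⟨_, _, _, rfl⟩ |
      ⟨_, _, _, rfl⟩ | ⟨_, _, rfl⟩
    · exact Or.inl rfl
    · exact Or.inl rfl
    · exact Or.inl rfl
    · exact Or.inl rfl
    · exact Or.inr rfl
  have hmodel : (termInterp P).isModel P := by
    intro C hC ρ hbody
    rcases hbodyP C hC with hb | hb
    · exact (termInterp_holdsAtom P ρ C.head).mpr ⟨C, hC, hb, ρ, rfl⟩
    · exact hbody C.head (by rw [hb]; exact List.mem_singleton_self _)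
  have hAhold := hEnt (termInterp P) hmodel Tm.var A hA
  rw [termInterp_holdsAtom] at hAhold
  obtain ⟨C, hC, hbody, ρ, hρ⟩ := hAhold
  have hAid : A.subst Tm.var = A := by
    simp only [Atom.subst]
    have h1 : A.args.map (Tm.subst Tm.var) = A.args.map id :=
      List.map_congr_left fun t _ => Tm.subst_id t
    rw [h1, List.map_id]
  rw [hAid] at hρ
  -- analyze which clause of P has A as an instance of its head
  rcases hPcases C hC with ⟨i, j, hij, rfl⟩ | ⟨i, f, hf, rfl⟩ | ⟨i, c, hc, rfl⟩ |
    ⟨B, hBQ, hBA, rfl⟩ | ⟨f, hf, rfl⟩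
  · have hρ' : (A'.subst (sub1 (W i) (.var (W j)))).subst ρ = A'.subst τ := by
      rw [hA'τ]; exact hρ
    rw [Atom.subst_comp] at hρ'
    have hcan := Atom.subst_cancel hρ'
    have h1 := hcan (W i) (hA'vars_sup (hWmem i))
    have h2 := hcan (W j) (hA'vars_sup (hWmem j))
    have hWji : ¬ (W j = W i) := fun h => hij (hWinj h).symm
    simp only [sub1, if_pos rfl, if_true, if_neg hWji, Tm.subst] at h1 h2
    rw [hτ, hTAU_lt' Tm.var (W i) (hvlt _ (hWmem i))] at h1
    rw [hτ, hTAU_lt' Tm.var (W j) (hvlt _ (hWmem j))] at h2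
    rw [h2] at h1
    exact hij (hWinj (Tm.var.injEq _ _ ▸ h1).symm ▸ rfl)
  · have hρ' : (A'.subst (sub1 (W i) (.app f (ar f) (fun l => .var (M + (l : ℕ)))))).subst ρ =
        A'.subst τ := by
      rw [hA'τ]; exact hρ
    rw [Atom.subst_comp] at hρ'
    have h1 := Atom.subst_cancel hρ' (W i) (hA'vars_sup (hWmem i))
    simp only [sub1, if_pos rfl, if_true, Tm.subst] at h1
    rw [hτ, hTAU_lt' Tm.var (W i) (hvlt _ (hWmem i))] at h1
    cases h1
  · have hρ' : (A'.subst (sub1 (W i) (.var (y c)))).subst ρ = A'.subst τ := by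
      rw [hA'τ]; exact hρ
    rw [Atom.subst_comp] at hρ'
    have hcan := Atom.subst_cancel hρ'
    have h1 := hcan (W i) (hA'vars_sup (hWmem i))
    have h2 := hcan (y c) (hyvar c hc)
    have hyWi : ¬ (y c = W i) := fun h =>
      absurd (hvlt _ (hWmem i)) (by rw [← h]; exact Nat.not_lt.mpr (hy_ge c hc).1)
    simp only [sub1, if_pos rfl, if_true, if_neg hyWi, Tm.subst] at h1 h2
    rw [hτ, hTAU_lt' Tm.var (W i) (hvlt _ (hWmem i))] at h1
    rw [hτ, hTAU_y Tm.var c hc] at h2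
    rw [h2] at h1
    cases h1
  · have hpred : B.pred = A.pred := by
      have := congrArg Atom.pred hρ
      simpa [Atom.subst, hgenA] using this
    exact hBA (List.inj_on_of_nodup_map hdistinct hBQ hA hpred)
  · have : (⟨TfH f, [TfH f]⟩ : Clause F Pr).body = [] := hbody
    simp at this
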